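/- Let R be an algebraic curvature tensor on ℝ⁴ satisfying the Chern basis conditions R_{1213} = R_{1214} = R_{1223} = R_{1224} = R_{1314} = R_{1323} = 0. Then |R|² = 4( R_{1212}² + R_{1313}² + R_{1414}² + R_{2323}² + R_{2424}² + R_{3434}² + 2R_{1234}² + 2R_{1324}² + 2R_{1423}² + 2(ρ_{12}² + ρ_{13}² + ρ_{14}² + ρ_{23}² + ρ_{24}² + ρ_{34}²) ), where |R|² = ∑_{a,b,c,d} R_{abcd}² and ρ is the Ricci tensor. -/

import Mathlib

/-- Ricci tensor of an algebraic curvature tensor, `ρ i j = ∑ a, R a i j a`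
(sign convention so that ρ is the usual Ricci contraction). -/
def Ric {n : ℕ} (R : Fin n → Fin n → Fin n → Fin n → ℝ) (i j : Fin n) : ℝ :=
  ∑ a, R a i j a

/-- Scalar curvature `τ = ∑ i, ρ i i`. -/
def scalCurv {n : ℕ} (R : Fin n → Fin n → Fin n → Fin n → ℝ) : ℝ :=
  ∑ i, Ric R i i

/-- Squared norm of the curvature tensor, `|R|² = ∑ R_{ijkl}²`. -/
def normR2 {n : ℕ} (R : Fin n → Fin n → Fin n → Fin n → ℝ) : ℝ :=
  ∑ i, ∑ j, ∑ k, ∑ l, (R i j k l) ^ 2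

/-- Squared norm of the Ricci tensor, `|ρ|² = ∑ ρ_{ij}²`. -/
def normRic2 {n : ℕ} (R : Fin n → Fin n → Fin n → Fin n → ℝ) : ℝ :=
  ∑ i, ∑ j, (Ric R i j) ^ 2

/-- `R` is an algebraic curvature tensor: antisymmetry in the first and last pairs,
pair-interchange symmetry, and the first Bianchi identity. -/
def IsACT {n : ℕ} (R : Fin n → Fin n → Fin n → Fin n → ℝ) : Prop :=
  (∀ i j k l, R i j k l = - R j i k l) ∧
  (∀ i j k l, R i j k l = - R i j l k) ∧
  (∀ i j k l, R i j k l = R k l i j) ∧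
  (∀ i j k l, R i j k l + R j k i l + R k i j l = 0)

/-- Kronecker delta. -/
def kron {n : ℕ} (i j : Fin n) : ℝ := if i = j then 1 else 0

/-!
View `R` as a symmetric form on `Λ²ℝ⁴` in the basis `eᵢ ∧ eⱼ`, `i < j`; then
`|R|² = 4 (∑ diagonal² + 2 ∑ off-diagonal²)`. Of the fifteen off-diagonal entries, three are
the `R_{ijkl}` with `{i,j,k,l} = {1,2,3,4}` and twelve have the form `R_{aiaj}`. For `i < j` and
`{a,b}` the complement of `{i,j}`, `ρ_{ij} = ±R_{aiaj} ± R_{bibj}`, and the Chern conditions kill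
exactly one of these two entries, so the twelve squares add up to `∑_{i<j} ρ_{ij}²`.
-/

theorem Fintype.sum_sum_eq_sum_diag_add_two_nsmul_sum_sum_lt {ι M : Type*} [Fintype ι]
    [LinearOrder ι] [AddCommMonoid M] (g : ι → ι → M) (hg : ∀ i j, g i j = g j i) :
    ∑ i, ∑ j, g i j = ∑ i, g i i + 2 • ∑ i, ∑ j, if i < j then g i j else 0 := by
  have hsplit (i j) : g i j = (if i < j then g i j else 0) + (if i = j then g i j else 0) +
      (if j < i then g j i else 0) := by
    rcases lt_trichotomy i j with h | rfl | h
    · simp [h, h.ne, h.not_gt]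
    · simp
    · simp [h, h.ne', h.not_gt, hg i j]
  have hlower :
      ∑ i, ∑ j, (if j < i then g j i else 0) = ∑ i, ∑ j, if i < j then g i j else 0 :=
    Finset.sum_comm
  simp_rw [two_nsmul]
  conv_lhs => enter [2, i, 2, j]; rw [hsplit i j]
  simp only [Finset.sum_add_distrib, hlower, Finset.sum_ite_eq, Finset.mem_univ, if_true]
  abel

section

variable {n : ℕ} {R : Fin n → Fin n → Fin n → Fin n → ℝ}

theorem apply_self_left_eq_zero (h₁ : ∀ i j k l, R i j k l = -R j i k l) (i k l : Fin n) :
    R i i k l = 0 := by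
  linarith [h₁ i i k l]

theorem apply_self_right_eq_zero (h₂ : ∀ i j k l, R i j k l = -R i j l k) (i j k : Fin n) :
    R i j k k = 0 := by
  linarith [h₂ i j k k]

theorem normR2_eq_four_mul_sum_lt (h₁ : ∀ i j k l, R i j k l = -R j i k l)
    (h₂ : ∀ i j k l, R i j k l = -R i j l k) :
    normR2 R = 4 * ∑ i, ∑ j,
      if i < j then ∑ k, ∑ l, (if k < l then R i j k l ^ 2 else 0) else 0 := by
  have hinner (i j) :
      ∑ k, ∑ l, R i j k l ^ 2 = 2 • ∑ k, ∑ l, if k < l then R i j k l ^ 2 else 0 := by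
    rw [Fintype.sum_sum_eq_sum_diag_add_two_nsmul_sum_sum_lt _
      fun k l => by rw [h₂ i j k l, neg_sq]]
    simp [apply_self_right_eq_zero h₂]
  have houter := Fintype.sum_sum_eq_sum_diag_add_two_nsmul_sum_sum_lt
    (fun i j => ∑ k, ∑ l, if k < l then R i j k l ^ 2 else 0)
    fun i j => by simp_rw [h₁ i j, neg_sq]
  have hdiag (i) : ∑ k, ∑ l, (if k < l then R i i k l ^ 2 else 0) = 0 := by
    simp [apply_self_left_eq_zero h₁]
  simp_rw [normR2, hinner, ← Finset.smul_sum]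
  rw [houter, Finset.sum_congr rfl fun i _ => hdiag i, Finset.sum_const_zero, zero_add, smul_smul,
    nsmul_eq_mul]
  norm_num

end

/-- The basis `eᵢ ∧ eⱼ`, `i < j`, of `Λ²ℝ⁴`. -/
def basisPairs : Fin 6 → Fin 4 × Fin 4 := ![(0, 1), (0, 2), (0, 3), (1, 2), (1, 3), (2, 3)]

theorem sum_sum_lt_fin_four {M : Type*} [AddCommMonoid M] (f : Fin 4 → Fin 4 → M) :
    ∑ i, ∑ j, (if i < j then f i j else 0) = ∑ p, f (basisPairs p).1 (basisPairs p).2 := by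
  simp only [Fin.sum_univ_four, Fin.sum_univ_six, basisPairs, Matrix.cons_val, Fin.reduceLT,
    ite_true, ite_false, add_zero, zero_add]
  abel

theorem normR2_fin_four {R : Fin 4 → Fin 4 → Fin 4 → Fin 4 → ℝ} (hR : IsACT R) :
    normR2 R =
      4 * ((R 0 1 0 1) ^ 2 + (R 0 2 0 2) ^ 2 + (R 0 3 0 3) ^ 2 + (R 1 2 1 2) ^ 2
        + (R 1 3 1 3) ^ 2 + (R 2 3 2 3) ^ 2
        + 2 * ((R 0 1 2 3) ^ 2 + (R 0 2 1 3) ^ 2 + (R 0 3 1 2) ^ 2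
          + (R 0 1 0 2) ^ 2 + (R 0 1 0 3) ^ 2 + (R 0 1 1 2) ^ 2 + (R 0 1 1 3) ^ 2
          + (R 0 2 0 3) ^ 2 + (R 0 2 1 2) ^ 2 + (R 0 2 2 3) ^ 2 + (R 0 3 1 3) ^ 2
          + (R 0 3 2 3) ^ 2 + (R 1 2 1 3) ^ 2 + (R 1 2 2 3) ^ 2 + (R 1 3 2 3) ^ 2)) := by
  obtain ⟨h₁, h₂, hpair, -⟩ := hR
  rw [normR2_eq_four_mul_sum_lt h₁ h₂]
  simp only [sum_sum_lt_fin_four]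
  rw [Fintype.sum_sum_eq_sum_diag_add_two_nsmul_sum_sum_lt _ fun p q => by rw [hpair]]
  simp only [Fin.sum_univ_six, basisPairs, Matrix.cons_val, Fin.reduceLT, ite_true, ite_false,
    add_zero, zero_add, nsmul_eq_mul]
  ring

theorem ric_fin_four {R : Fin 4 → Fin 4 → Fin 4 → Fin 4 → ℝ} (hR : IsACT R) :
    Ric R 0 1 = -(R 0 2 1 2 + R 0 3 1 3) ∧ Ric R 0 2 = R 0 1 1 2 - R 0 3 2 3 ∧
    Ric R 0 3 = R 0 1 1 3 + R 0 2 2 3 ∧ Ric R 1 2 = -(R 0 1 0 2 + R 1 3 2 3) ∧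
    Ric R 1 3 = R 1 2 2 3 - R 0 1 0 3 ∧ Ric R 2 3 = -(R 0 2 0 3 + R 1 2 1 3) := by
  obtain ⟨h₁, h₂, -, -⟩ := hR
  simp only [Ric, Fin.sum_univ_four, apply_self_left_eq_zero h₁, apply_self_right_eq_zero h₂,
    zero_add, add_zero]
  refine ⟨?_, ?_, ?_, ?_, ?_, ?_⟩
  · linarith [h₁ 2 0 1 2, h₁ 3 0 1 3]
  · linarith [h₁ 1 0 2 1, h₂ 0 1 2 1, h₁ 3 0 2 3]
  · linarith [h₁ 1 0 3 1, h₂ 0 1 3 1, h₁ 2 0 3 2, h₂ 0 2 3 2]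
  · linarith [h₂ 0 1 2 0, h₁ 3 1 2 3]
  · linarith [h₂ 0 1 3 0, h₁ 2 1 3 2, h₂ 1 2 3 2]
  · linarith [h₂ 0 2 3 0, h₂ 1 2 3 1]

theorem chern_basis_normR2 (R : Fin 4 → Fin 4 → Fin 4 → Fin 4 → ℝ) (hR : IsACT R)
    (hC1 : R 0 1 0 2 = 0) (hC2 : R 0 1 0 3 = 0) (hC3 : R 0 1 1 2 = 0)
    (hC4 : R 0 1 1 3 = 0) (hC5 : R 0 2 0 3 = 0) (hC6 : R 0 2 1 2 = 0) :
    normR2 R =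
      4 * ((R 0 1 0 1) ^ 2 + (R 0 2 0 2) ^ 2 + (R 0 3 0 3) ^ 2 + (R 1 2 1 2) ^ 2
        + (R 1 3 1 3) ^ 2 + (R 2 3 2 3) ^ 2
        + 2 * (R 0 1 2 3) ^ 2 + 2 * (R 0 2 1 3) ^ 2 + 2 * (R 0 3 1 2) ^ 2
        + 2 * ((Ric R 0 1) ^ 2 + (Ric R 0 2) ^ 2 + (Ric R 0 3) ^ 2
          + (Ric R 1 2) ^ 2 + (Ric R 1 3) ^ 2 + (Ric R 2 3) ^ 2)) := by
  obtain ⟨hρ01, hρ02, hρ03, hρ12, hρ13, hρ23⟩ := ric_fin_four hR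
  rw [normR2_fin_four hR, hρ01, hρ02, hρ03, hρ12, hρ13, hρ23, hC1, hC2, hC3, hC4, hC5, hC6]
  ring
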